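/- The integral over the real line ∫_ℝ (−2ix² − x + i)/((x − i)⁴(x + i)³) dx equals −π/4. -/

import Mathlib

/-!
Partial fractions split the integrand into `-(1/4) (1 + x²)⁻¹` plus multiples of `(x ∓ i)⁻ⁿ`
with `n ≥ 2`. Such a term has the antiderivative `-(x ∓ i)^(1-n) / (n - 1)`, which tends to `0`
at both ends of the real line, so it integrates to `0`; what remains is `-(1/4) ∫ (1 + x²)⁻¹ = -π/4`.
-/

open Complex Real Filter MeasureTheory Topology

namespace Complex

variable {a : ℂ}

lemma ofReal_sub_ne_zero (ha : a.im ≠ 0) (x : ℝ) : (x : ℂ) - a ≠ 0 := by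
  intro h
  exact ha (by simpa using congrArg im h)

lemma abs_im_le_norm_ofReal_sub (a : ℂ) (x : ℝ) : |a.im| ≤ ‖(x : ℂ) - a‖ := by
  simpa using abs_im_le_norm ((x : ℂ) - a)

lemma norm_ofReal_sub_sq (a : ℂ) (x : ℝ) : ‖(x : ℂ) - a‖ ^ 2 = (x - a.re) ^ 2 + a.im ^ 2 := by
  rw [Complex.sq_norm, normSq_apply]
  simp only [sub_re, ofReal_re, sub_im, ofReal_im, zero_sub]
  ring

lemma integrable_inv_ofReal_sub_sq (ha : a.im ≠ 0) :
    Integrable fun x : ℝ => (((x : ℂ) - a) ^ 2)⁻¹ := by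
  have hg : Integrable fun x : ℝ => (a.im ^ 2)⁻¹ * (1 + ((x - a.re) / a.im) ^ 2)⁻¹ :=
    ((integrable_inv_one_add_sq.comp_div ha).comp_sub_right a.re).const_mul _
  refine hg.mono' (by fun_prop) (ae_of_all _ fun x => le_of_eq ?_)
  rw [norm_inv, norm_pow, norm_ofReal_sub_sq]
  field_simp
  ring

lemma integrable_inv_ofReal_sub_pow (ha : a.im ≠ 0) {n : ℕ} (hn : 2 ≤ n) :
    Integrable fun x : ℝ => (((x : ℂ) - a) ^ n)⁻¹ := by
  obtain ⟨k, rfl⟩ := Nat.exists_eq_add_of_le' hn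
  have hbound (x : ℝ) : ‖(((x : ℂ) - a) ^ k)⁻¹‖ ≤ (|a.im| ^ k)⁻¹ := by
    rw [norm_inv, norm_pow]
    gcongr
    exact abs_im_le_norm_ofReal_sub a x
  simpa [pow_add, mul_inv, mul_comm] using
    (integrable_inv_ofReal_sub_sq ha).bdd_mul (by fun_prop) (ae_of_all _ hbound)

lemma hasDerivAt_inv_sub_pow {z : ℂ} (hz : z - a ≠ 0) (k : ℕ) :
    HasDerivAt (fun w : ℂ => ((w - a) ^ k)⁻¹) (-k * ((z - a) ^ (k + 1))⁻¹) z := by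
  refine ((((hasDerivAt_id z).sub_const a).pow k).inv (pow_ne_zero k hz)).congr_deriv ?_
  rcases k with _ | k
  · simp
  · simp only [id, Pi.pow_apply, Nat.add_sub_cancel, mul_one]
    field_simp
    ring

lemma tendsto_inv_ofReal_sub_pow_cobounded (a : ℂ) {k : ℕ} (hk : k ≠ 0) :
    Tendsto (fun x : ℝ => (((x : ℂ) - a) ^ k)⁻¹) (Bornology.cobounded ℝ) (𝓝 0) :=
  tendsto_inv₀_cobounded.comp <| (tendsto_pow_cobounded_cobounded hk).comp <|
    (tendsto_sub_const_cobounded a).comp <| RCLike.tendsto_ofReal_cobounded_cobounded ℂ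

lemma integral_inv_ofReal_sub_pow (ha : a.im ≠ 0) {n : ℕ} (hn : 2 ≤ n) :
    ∫ x : ℝ, (((x : ℂ) - a) ^ n)⁻¹ = 0 := by
  obtain ⟨k, rfl⟩ := Nat.exists_eq_add_of_le' hn
  have hderiv (x : ℝ) : HasDerivAt (fun y : ℝ => (((y : ℂ) - a) ^ (k + 1))⁻¹)
      (-((k + 1 : ℕ) : ℂ) * (((x : ℂ) - a) ^ (k + 2))⁻¹) x :=
    (hasDerivAt_inv_sub_pow (ofReal_sub_ne_zero ha x) (k + 1)).comp_ofReal
  have hlim := tendsto_inv_ofReal_sub_pow_cobounded a k.succ_ne_zero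
  have hftc := integral_of_hasDerivAt_of_tendsto hderiv
    ((integrable_inv_ofReal_sub_pow ha hn).const_mul _)
    (hlim.mono_left IsOrderBornology.atBot_le_cobounded)
    (hlim.mono_left IsOrderBornology.atTop_le_cobounded)
  rw [integral_const_mul, sub_self] at hftc
  exact (mul_eq_zero.mp hftc).resolve_left
    (neg_ne_zero.mpr (Nat.cast_ne_zero.mpr k.succ_ne_zero))

end Complex

lemma integrand_eq_partial_fractions (x : ℝ) :
    (-2 * I * (x : ℂ) ^ 2 - (x : ℂ) + I) / (((x : ℂ) - I) ^ 4 * ((x : ℂ) + I) ^ 3) =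
      -(1 / 4) * (((1 + x ^ 2)⁻¹ : ℝ) : ℂ) + (-(1 / 4) * (((x : ℂ) - I) ^ 4)⁻¹
        + 1 / 16 * (((x : ℂ) - I) ^ 2)⁻¹ + I / 4 * (((x : ℂ) + I) ^ 3)⁻¹
        + 3 / 16 * (((x : ℂ) + I) ^ 2)⁻¹) := by
  have h1 : (x : ℂ) - I ≠ 0 := ofReal_sub_ne_zero (by simp) x
  have h2 : (x : ℂ) + I ≠ 0 := by simpa using ofReal_sub_ne_zero (a := -I) (by simp) x
  have h3 : (1 + (x : ℂ) ^ 2) = ((x : ℂ) - I) * ((x : ℂ) + I) := by linear_combination I_sq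
  push_cast
  rw [h3]
  field_simp
  linear_combination (16 * (x : ℂ) ^ 3 - 80 * (x : ℂ) ^ 2 * I + 16 * (x : ℂ) * (7 * I ^ 2 - 4)
    - 16 * I * (3 * I ^ 2 - 4)) * I_sq

theorem stmt_17 :
    ∫ x : ℝ, (-2 * I * (x : ℂ) ^ 2 - (x : ℂ) + I) / (((x : ℂ) - I) ^ 4 * ((x : ℂ) + I) ^ 3) = -((Real.pi : ℂ) / 4) := by
  have hI : I.im ≠ 0 := by simp
  have hnI : (-I).im ≠ 0 := by simp
  have hint {a : ℂ} (ha : a.im ≠ 0) {n : ℕ} (hn : 2 ≤ n) (c : ℂ) :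
      Integrable fun x : ℝ => c * (((x : ℂ) - a) ^ n)⁻¹ :=
    (integrable_inv_ofReal_sub_pow ha hn).const_mul c
  have hzero {a : ℂ} (ha : a.im ≠ 0) {n : ℕ} (hn : 2 ≤ n) (c : ℂ) :
      ∫ x : ℝ, c * (((x : ℂ) - a) ^ n)⁻¹ = 0 := by
    rw [integral_const_mul, integral_inv_ofReal_sub_pow ha hn, mul_zero]
  have h0 : Integrable fun x : ℝ => -(1 / 4 : ℂ) * (((1 + x ^ 2)⁻¹ : ℝ) : ℂ) :=
    integrable_inv_one_add_sq.ofReal.const_mul _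
  have h1 := hint hI (n := 4) (by norm_num) (-(1 / 4))
  have h2 := hint hI (n := 2) le_rfl (1 / 16)
  have h3 := hint hnI (n := 3) (by norm_num) (I / 4)
  have h4 := hint hnI (n := 2) le_rfl (3 / 16)
  simp_rw [integrand_eq_partial_fractions, ← sub_neg_eq_add _ I]
  rw [integral_add h0 (((h1.fun_add h2).fun_add h3).fun_add h4),
    integral_add ((h1.fun_add h2).fun_add h3) h4, integral_add (h1.fun_add h2) h3,
    integral_add h1 h2,
    hzero hI (by norm_num), hzero hI le_rfl, hzero hnI (by norm_num), hzero hnI le_rfl,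
    integral_const_mul, integral_complex_ofReal, integral_univ_inv_one_add_sq]
  ring
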